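/- arXiv:math/0101158 — 2 statements merged into one kernel-verified Lean document; each statement's English description precedes it below -/
import Mathlib

section
/- Fix a Coxeter element c of W and let M be the dual braid monoid (the monoid presented by generators T subject to the dual braid relations with respect to c). Let s,t ∈ T with s ≠ t, and let m be the order of st in W. Then the following are equivalent: (i) st ≺_T c or ts ≺_T c (s and t are non-crossing with respect to c); (ii) the classical braid relation holds in M, i.e., the two alternating products sts⋯ and tst⋯, each with m factors, are equal in M. -/
/-- The reflection length of `w` with respect to a generating set `T`:
the least `k` such that `w` is a product of `k` elements of `T`. -/
noncomputable def reflLen {W : Type*} [Group W] (T : Set W) (w : W) : ℕ :=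
  sInf {k | ∃ l : List W, (∀ t ∈ l, t ∈ T) ∧ l.length = k ∧ l.prod = w}

/-- The absolute order: `u ≺_T w` iff `l_T(u) + l_T(u⁻¹w) = l_T(w)`. -/
def absLE {W : Type*} [Group W] (T : Set W) (u w : W) : Prop :=
  reflLen T u + reflLen T (u⁻¹ * w) = reflLen T w

/-- `S` is the set of simple reflections of some Coxeter system structure on `W`. -/
def IsSimpleSystem (W : Type*) [Group W] (S : Set W) : Prop :=
  ∃ (n : ℕ) (M : CoxeterMatrix (Fin n)) (cs : CoxeterSystem M W),
    Set.range cs.simple = S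

/-- A chromatic pair: an ordered pair of disjoint subsets of `T` (given here as lists
of their elements, without repetition), each consisting of pairwise commuting elements,
whose union is the set of simple reflections of some Coxeter system structure on `W`. -/
structure IsChromaticPair {W : Type*} [Group W] (T : Set W) (L R : List W) : Prop where
  memL : ∀ x ∈ L, x ∈ T
  memR : ∀ x ∈ R, x ∈ T
  nodupL : L.Nodup
  nodupR : R.Nodup
  disj : ∀ x ∈ L, x ∉ R
  commL : ∀ x ∈ L, ∀ y ∈ L, Commute x y
  commR : ∀ x ∈ R, ∀ y ∈ R, Commute x y
  simple : IsSimpleSystem W ({x | x ∈ L} ∪ {x | x ∈ R})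

/-- A Coxeter element: the product `(∏_{s ∈ L} s) · (∏_{s ∈ R} s)` over a chromatic
pair `(L, R)`. -/
def IsCoxeterElement {W : Type*} [Group W] (T : Set W) (c : W) : Prop :=
  ∃ L R : List W, IsChromaticPair T L R ∧ c = L.prod * R.prod

/-- The dual braid relations with respect to `c`, as a relation on the free monoid on `T`:
for `s, t ∈ T` with `st ≺_T c`, the relation `s·t = (sts)·s`. -/
def dualBraidRels {W : Type*} [Group W] (T : Set W) (c : W) :
    FreeMonoid T → FreeMonoid T → Prop :=
  fun a b => ∃ s t u : T, absLE T ((s : W) * t) c ∧ (u : W) = (s : W) * t * s ∧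
    a = FreeMonoid.of s * FreeMonoid.of t ∧ b = FreeMonoid.of u * FreeMonoid.of s

namespace DualBraidAux

open FreeMonoid

/-- Alternating list `[S, T, S, T, ...]` of length `m`. -/
def altL {α : Type*} (S T : α) : ℕ → List α
  | 0 => []
  | 1 => [S]
  | (k+2) => S :: T :: altL S T k

/-- Descending chain `[ρ k, ρ (k-1), ..., ρ 1]`. -/
def chainL {α : Type*} (ρ : ℕ → α) : ℕ → List α
  | 0 => []
  | (k+1) => ρ (k+1) :: chainL ρ k

theorem ofFn_alt {α : Type*} (S T : α) :
    ∀ m, List.ofFn (fun k : Fin m => if (k : ℕ) % 2 = 0 then S else T) = altL S T m := by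
  intro m
  induction m using Nat.twoStepInduction with
  | zero => simp [altL]
  | one => simp [altL]
  | more k ih0 ih1 =>
    rw [List.ofFn_succ, List.ofFn_succ]
    have h2 : (fun i : Fin k => if ((i.succ.succ : Fin (k+2)) : ℕ) % 2 = 0 then S else T)
        = fun i : Fin k => if (i : ℕ) % 2 = 0 then S else T := by
      funext i
      have : ((i.succ.succ : Fin (k+2)) : ℕ) = (i : ℕ) + 2 := rfl
      rw [this, Nat.add_mod_right]
    simp only [Fin.val_succ, Fin.val_zero] at *
    show (if (0 : ℕ) % 2 = 0 then S else T) :: (if (0 + 1 : ℕ) % 2 = 0 then S else T) ::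
        List.ofFn _ = altL S T (k + 2)
    rw [altL]
    norm_num
    have h3 : (fun i : Fin k => if ((i : ℕ) + 1 + 1) % 2 = 0 then S else T)
        = fun i : Fin k => if (i : ℕ) % 2 = 0 then S else T := by
      funext i
      rw [show (i : ℕ) + 1 + 1 = (i : ℕ) + 2 from rfl, Nat.add_mod_right]
    rw [h3]
    exact ih0


variable {W : Type} [Group W]

theorem braid_of_absLE (T : Set W) (c : W)
    (hTinv : ∀ a ∈ T, a * a = 1)
    (hTconj : ∀ a ∈ T, ∀ b ∈ T, a * b * a ∈ T)
    (s t : W) (hs : s ∈ T) (ht : t ∈ T)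
    (habs : absLE T (s * t) c)
    (m : ℕ) (hpow : (s * t) ^ m = 1) :
    PresentedMonoid.mk (dualBraidRels T c)
        (FreeMonoid.ofList (List.ofFn
          (fun k : Fin m => if (k : ℕ) % 2 = 0 then (⟨s, hs⟩ : T) else (⟨t, ht⟩ : T))))
      = PresentedMonoid.mk (dualBraidRels T c)
        (FreeMonoid.ofList (List.ofFn
          (fun k : Fin m => if (k : ℕ) % 2 = 0 then (⟨t, ht⟩ : T) else (⟨s, hs⟩ : T)))) := by
  have hss : s * s = 1 := hTinv s hs
  have htt : t * t = 1 := hTinv t ht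
  have hti : t⁻¹ = t := inv_eq_of_mul_eq_one_right htt
  set r : ℕ → W := fun k => (s * t) ^ k * t with hrdef
  have hr0 : r 0 = t := by simp [hrdef]
  have hr1 : r 1 = s := by
    show (s * t) ^ 1 * t = s
    rw [pow_one, mul_assoc, htt, mul_one]
  have hzt : t * (s * t) * t = (s * t)⁻¹ := by
    have h1 : (s * t) * (t * (s * t) * t) = 1 := by
      rw [show (s*t) * (t * (s*t) * t) = s * ((t*t) * (s * (t * t))) by group]
      rw [htt]
      rw [show s * (1 * (s * 1)) = s * s by group]
      exact hss
    exact (inv_eq_of_mul_eq_one_right h1).symm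
  have hconj : ∀ k : ℕ, t * (s * t) ^ k * t = ((s * t) ^ k)⁻¹ := by
    intro k
    have := conj_pow (i := k) (a := t) (b := s * t)
    rw [hti] at this
    rw [← this, hzt, inv_pow]
  have hrr : ∀ k, r (k + 1) * r k = s * t := by
    intro k
    show ((s * t) ^ (k+1) * t) * ((s * t) ^ k * t) = s * t
    have e1 : ((s * t) ^ (k+1) * t) * ((s * t) ^ k * t)
        = (s * t) ^ (k+1) * (t * (s * t) ^ k * t) := by group
    rw [e1, hconj, pow_succ', mul_assoc, mul_inv_cancel, mul_one]
  have hstep : ∀ k, r (k + 1) = (s * t) * r k := by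
    intro k
    show (s * t) ^ (k+1) * t = (s * t) * ((s * t) ^ k * t)
    rw [pow_succ', mul_assoc]
  have hr2 : ∀ k, r (k + 1) * r k * r (k + 1) = r (k + 2) := by
    intro k
    rw [hrr k, ← hstep (k + 1)]
  have hrT : ∀ k, r k ∈ T := by
    intro k
    induction k using Nat.twoStepInduction with
    | zero => rw [hr0]; exact ht
    | one => rw [hr1]; exact hs
    | more k ih0 ih1 => rw [← hr2 k]; exact hTconj _ ih1 _ ih0
  set ρ : ℕ → T := fun k => ⟨r k, hrT k⟩ with hρdef
  have hρ1 : ρ 1 = ⟨s, hs⟩ := Subtype.ext hr1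
  have hρ0 : ρ 0 = ⟨t, ht⟩ := Subtype.ext hr0
  have hrel : ∀ k, PresentedMonoid.mk (dualBraidRels T c)
        (FreeMonoid.of (ρ (k+1)) * FreeMonoid.of (ρ k))
      = PresentedMonoid.mk (dualBraidRels T c)
        (FreeMonoid.of (ρ (k+2)) * FreeMonoid.of (ρ (k+1))) := by
    intro k
    apply Quotient.sound
    apply ConGen.Rel.of
    refine ⟨ρ (k+1), ρ k, ρ (k+2), ?_, ?_, rfl, rfl⟩
    · show absLE T (r (k+1) * r k) c
      rw [hrr k]; exact habs
    · exact (hr2 k).symm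
  have hδ : ∀ k, PresentedMonoid.mk (dualBraidRels T c)
        (FreeMonoid.of (ρ (k+1)) * FreeMonoid.of (ρ k))
      = PresentedMonoid.mk (dualBraidRels T c)
        (FreeMonoid.of (ρ 1) * FreeMonoid.of (ρ 0)) := by
    intro k
    induction k with
    | zero => rfl
    | succ k ih => rw [← hrel k]; exact ih
  have hchain : ∀ k, PresentedMonoid.mk (dualBraidRels T c)
        (FreeMonoid.ofList (altL (⟨s, hs⟩ : T) (⟨t, ht⟩ : T) k))
      = PresentedMonoid.mk (dualBraidRels T c) (FreeMonoid.ofList (chainL ρ k)) := by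
    intro k
    induction k using Nat.twoStepInduction with
    | zero => rfl
    | one =>
      show PresentedMonoid.mk _ (FreeMonoid.ofList [(⟨s, hs⟩ : T)])
          = PresentedMonoid.mk _ (FreeMonoid.ofList [ρ 1])
      rw [hρ1]
    | more k ih0 ih1 =>
      have e1 : FreeMonoid.ofList (altL (⟨s, hs⟩ : T) (⟨t, ht⟩ : T) (k+2))
          = (FreeMonoid.of (⟨s, hs⟩ : T) * FreeMonoid.of (⟨t, ht⟩ : T))
            * FreeMonoid.ofList (altL (⟨s, hs⟩ : T) (⟨t, ht⟩ : T) k) := rfl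
      have e2 : FreeMonoid.ofList (chainL ρ (k+2))
          = (FreeMonoid.of (ρ (k+2)) * FreeMonoid.of (ρ (k+1)))
            * FreeMonoid.ofList (chainL ρ k) := rfl
      rw [e1, e2, map_mul, map_mul, map_mul, map_mul, ih0, ← hρ1, ← hρ0]
      congr 1
      rw [← map_mul, ← map_mul]
      exact (hδ (k+1)).symm
  rcases m with _ | k
  · rfl
  · have hWs := ofFn_alt (⟨s, hs⟩ : T) (⟨t, ht⟩ : T) (k+1)
    have hWt : List.ofFn (fun i : Fin (k+1) => if (i : ℕ) % 2 = 0 then (⟨t, ht⟩ : T) else ⟨s, hs⟩)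
        = (⟨t, ht⟩ : T) :: altL (⟨s, hs⟩ : T) (⟨t, ht⟩ : T) k := by
      rw [List.ofFn_succ]
      have h0 : ((0 : Fin (k+1)) : ℕ) % 2 = 0 := rfl
      rw [if_pos h0]
      congr 1
      have h3 : (fun i : Fin k => if ((i.succ : Fin (k+1)) : ℕ) % 2 = 0 then (⟨t, ht⟩ : T) else ⟨s, hs⟩)
          = fun i : Fin k => if (i : ℕ) % 2 = 0 then (⟨s, hs⟩ : T) else ⟨t, ht⟩ := by
        funext i
        have : ((i.succ : Fin (k+1)) : ℕ) = (i : ℕ) + 1 := rfl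
        rw [this]
        rcases Nat.mod_two_eq_zero_or_one (i : ℕ) with he | he
        · simp [Nat.add_mod, he]
        · simp [Nat.add_mod, he]
      rw [h3]
      exact ofFn_alt _ _ k
    rw [hWs, hWt]
    have hρm : ρ (k+1) = ⟨t, ht⟩ := by
      apply Subtype.ext
      show (s * t) ^ (k + 1) * t = t
      rw [hpow, one_mul]
    have e3 : FreeMonoid.ofList ((⟨t, ht⟩ : T) :: altL (⟨s, hs⟩ : T) (⟨t, ht⟩ : T) k)
        = FreeMonoid.of (⟨t, ht⟩ : T) * FreeMonoid.ofList (altL (⟨s, hs⟩ : T) (⟨t, ht⟩ : T) k) := rfl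
    have e4 : FreeMonoid.ofList (chainL ρ (k+1))
        = FreeMonoid.of (ρ (k+1)) * FreeMonoid.ofList (chainL ρ k) := rfl
    rw [hchain (k+1), e3, e4, map_mul, map_mul, hρm, hchain k]

theorem no_braid (T : Set W) (c : W)
    (hTinv : ∀ a ∈ T, a * a = 1)
    (s t : W) (hs : s ∈ T) (ht : t ∈ T) (hst : s ≠ t)
    (hns : ¬ absLE T (s * t) c) (hnt : ¬ absLE T (t * s) c)
    (m : ℕ) (hm : 0 < m) :
    PresentedMonoid.mk (dualBraidRels T c)
        (FreeMonoid.ofList (List.ofFn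
          (fun k : Fin m => if (k : ℕ) % 2 = 0 then (⟨s, hs⟩ : T) else (⟨t, ht⟩ : T))))
      ≠ PresentedMonoid.mk (dualBraidRels T c)
        (FreeMonoid.ofList (List.ofFn
          (fun k : Fin m => if (k : ℕ) % 2 = 0 then (⟨t, ht⟩ : T) else (⟨s, hs⟩ : T)))) := by
  intro hEq
  set f : Fin m → T := fun k => if (k : ℕ) % 2 = 0 then (⟨s, hs⟩ : T) else ⟨t, ht⟩ with hf
  set g : Fin m → T := fun k => if (k : ℕ) % 2 = 0 then (⟨t, ht⟩ : T) else ⟨s, hs⟩ with hg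
  set Ws : FreeMonoid T := FreeMonoid.ofList (List.ofFn f) with hWs
  set Wt : FreeMonoid T := FreeMonoid.ofList (List.ofFn g) with hWt
  set step : FreeMonoid T → FreeMonoid T → Prop := fun x y =>
    ∃ a b p q, (dualBraidRels T c a b ∨ dualBraidRels T c b a) ∧ x = p * a * q ∧ y = p * b * q
    with hstepdef
  have hstepsymm : ∀ {x y}, step x y → step y x := by
    rintro x y ⟨a, b, p, q, h, hx, hy⟩
    exact ⟨b, a, p, q, h.symm, hy, hx⟩
  have hstepr : ∀ {x y} (u : FreeMonoid T), step x y → step (x * u) (y * u) := by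
    rintro x y u ⟨a, b, p, q, h, rfl, rfl⟩
    exact ⟨a, b, p, q * u, h, by simp [mul_assoc], by simp [mul_assoc]⟩
  have hstepl : ∀ {x y} (u : FreeMonoid T), step x y → step (u * x) (u * y) := by
    rintro x y u ⟨a, b, p, q, h, rfl, rfl⟩
    exact ⟨a, b, u * p, q, h, by simp [mul_assoc], by simp [mul_assoc]⟩
  have hEr : ∀ {x y} (u : FreeMonoid T), Relation.EqvGen step x y →
      Relation.EqvGen step (x * u) (y * u) := by
    intro x y u h
    induction h with
    | rel a b h => exact .rel _ _ (hstepr u h)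
    | refl a => exact .refl _
    | symm a b h ih => exact .symm _ _ ih
    | trans a b d h1 h2 ih1 ih2 => exact .trans _ _ _ ih1 ih2
  have hEl : ∀ {x y} (u : FreeMonoid T), Relation.EqvGen step x y →
      Relation.EqvGen step (u * x) (u * y) := by
    intro x y u h
    induction h with
    | rel a b h => exact .rel _ _ (hstepl u h)
    | refl a => exact .refl _
    | symm a b h ih => exact .symm _ _ ih
    | trans a b d h1 h2 ih1 ih2 => exact .trans _ _ _ ih1 ih2
  set C : Con (FreeMonoid T) :=
    ⟨⟨Relation.EqvGen step, Relation.EqvGen.is_equivalence step⟩,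
      fun {w x y z} h1 h2 => Relation.EqvGen.trans _ _ _ (hEr y h1) (hEl x h2)⟩ with hC
  have hle : conGen (dualBraidRels T c) ≤ C :=
    Con.conGen_le.mpr (fun x y h =>
      Relation.EqvGen.rel x y ⟨x, y, 1, 1, Or.inl h, by simp, by simp⟩)
  have hCG : (conGen (dualBraidRels T c)) Ws Wt := Quotient.exact hEq
  have hE : Relation.EqvGen step Ws Wt := hle hCG
  have hkey : ∀ x y, step x y → x ≠ Ws := by
    rintro x y ⟨a, b, p, q, hab, rfl, -⟩ hxW
    obtain ⟨x1, x2, ha, habs⟩ :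
        ∃ x1 x2 : T, a = FreeMonoid.of x1 * FreeMonoid.of x2 ∧ absLE T ((x1 : W) * x2) c := by
      rcases hab with h | h
      · obtain ⟨s', t', u, h1, h2, ha, hb⟩ := h
        exact ⟨s', t', ha, h1⟩
      · obtain ⟨s', t', u, h1, h2, hb, ha⟩ := h
        refine ⟨u, s', ha, ?_⟩
        have hss' : (s' : W) * s' = 1 := hTinv s' s'.2
        have : (u : W) * s' = (s' : W) * t' := by
          rw [h2, mul_assoc, hss', mul_one]
        rw [this]
        exact h1
    subst ha
    have hlist : List.ofFn f = FreeMonoid.toList p ++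
        ((x1 : T) :: (x2 : T) :: FreeMonoid.toList q) := by
      have := congrArg FreeMonoid.toList hxW
      simp only [FreeMonoid.toList_mul, FreeMonoid.toList_of] at this
      rw [hWs] at this
      simpa [List.append_assoc] using this.symm
    set i := (FreeMonoid.toList p).length with hi
    have h1 : (List.ofFn f)[i]? = some x1 := by
      rw [hlist, List.getElem?_append_right (le_refl i)]
      simp [hi]
    have h2 : (List.ofFn f)[i+1]? = some x2 := by
      rw [hlist, List.getElem?_append_right (by omega : i ≤ i + 1)]
      simp [hi, Nat.add_sub_cancel_left]
    rw [List.getElem?_ofFn] at h1 h2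
    split at h1
    case isFalse => cases h1
    case isTrue hilt =>
    split at h2
    case isFalse => cases h2
    case isTrue hilt2 =>
    have hx1 : x1 = f ⟨i, hilt⟩ := (Option.some.inj h1).symm
    have hx2 : x2 = f ⟨i + 1, hilt2⟩ := (Option.some.inj h2).symm
    rcases Nat.mod_two_eq_zero_or_one i with he | he
    · apply hns
      have e1 : x1 = (⟨s, hs⟩ : T) := by rw [hx1, hf]; simp [he]
      have e2 : x2 = (⟨t, ht⟩ : T) := by rw [hx2, hf]; simp [Nat.add_mod, he]
      rw [e1, e2] at habs
      exact habs
    · apply hnt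
      have e1 : x1 = (⟨t, ht⟩ : T) := by rw [hx1, hf]; simp [he]
      have e2 : x2 = (⟨s, hs⟩ : T) := by rw [hx2, hf]; simp [Nat.add_mod, he]
      rw [e1, e2] at habs
      exact habs
  have hfix : ∀ x y, Relation.EqvGen step x y → (x = Ws ↔ y = Ws) := by
    intro x y h
    induction h with
    | rel a b h =>
      constructor
      · intro hx; exact absurd hx (hkey _ _ h)
      · intro hy; exact absurd hy (hkey _ _ (hstepsymm h))
    | refl a => exact Iff.rfl
    | symm a b h ih => exact ih.symm
    | trans a b d h1 h2 ih1 ih2 => exact ih1.trans ih2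
  have hWtWs : Wt = Ws := (hfix _ _ hE).mp rfl
  rcases m with _ | k
  · exact absurd hm (lt_irrefl 0)
  · have hl : List.ofFn g = List.ofFn f := congrArg FreeMonoid.toList hWtWs
    have := congrArg (fun l : List T => l[0]?) hl
    simp only [List.getElem?_ofFn] at this
    rw [dif_pos (Nat.succ_pos k), dif_pos (Nat.succ_pos k)] at this
    have h0 : g ⟨0, Nat.succ_pos k⟩ = f ⟨0, Nat.succ_pos k⟩ := Option.some.inj this
    rw [hf, hg] at h0
    simp only [Fin.val_mk, Nat.zero_mod, if_pos, Subtype.mk.injEq, reduceIte] at h0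
    exact hst h0.symm

end DualBraidAux

/-- In the dual braid monoid, two distinct reflections `s ≠ t` satisfy the classical
braid relation of length `m = ord(st)` if and only if they are non-crossing with
respect to `c`, i.e. `st ≺_T c` or `ts ≺_T c`. -/
theorem noncrossing_iff_braid_relation_in_dual_monoid
    {B : Type} [Fintype B] {W : Type} [Group W] [Finite W] {M : CoxeterMatrix B}
    (cs : CoxeterSystem M W)
    (T : Set W) (hT : T = {t | cs.IsReflection t})
    (c : W) (hc : IsCoxeterElement T c)
    (s t : W) (hs : s ∈ T) (ht : t ∈ T) (hst : s ≠ t)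
    (m : ℕ) (hm : m = orderOf (s * t)) :
    (absLE T (s * t) c ∨ absLE T (t * s) c) ↔
      PresentedMonoid.mk (dualBraidRels T c)
          (FreeMonoid.ofList (List.ofFn
            (fun k : Fin m => if (k : ℕ) % 2 = 0 then (⟨s, hs⟩ : T) else (⟨t, ht⟩ : T))))
        = PresentedMonoid.mk (dualBraidRels T c)
          (FreeMonoid.ofList (List.ofFn
            (fun k : Fin m => if (k : ℕ) % 2 = 0 then (⟨t, ht⟩ : T) else (⟨s, hs⟩ : T)))) := by
  subst hT
  have hTinv : ∀ a ∈ {t | cs.IsReflection t}, a * a = 1 :=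
    fun a ha => CoxeterSystem.IsReflection.mul_self ha
  have hTconj : ∀ a ∈ {t | cs.IsReflection t}, ∀ b ∈ {t | cs.IsReflection t},
      a * b * a ∈ {t | cs.IsReflection t} := by
    intro a ha b hb
    have h1 := CoxeterSystem.IsReflection.conj hb a
    rwa [CoxeterSystem.IsReflection.inv ha] at h1
  have hmpos : 0 < m := hm ▸ orderOf_pos (s * t)
  have hpow : (s * t) ^ m = 1 := by rw [hm]; exact pow_orderOf_eq_one _
  constructor
  · rintro (h | h)
    · exact DualBraidAux.braid_of_absLE _ c hTinv hTconj s t hs ht h m hpow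
    · have hpow' : (t * s) ^ m = 1 := by
        have h1 : (s * t) * (t * s) = 1 := by
          rw [mul_assoc, ← mul_assoc t t s, hTinv t ht, one_mul]
          exact hTinv s hs
        have hts : t * s = (s * t)⁻¹ := (inv_eq_of_mul_eq_one_right h1).symm
        rw [hts, inv_pow, hpow, inv_one]
      exact (DualBraidAux.braid_of_absLE _ c hTinv hTconj t s ht hs h m hpow').symm
  · intro h
    by_contra hn
    push_neg at hn
    exact DualBraidAux.no_braid _ c hTinv s t hs ht hst hn.1 hn.2 m hmpos h
end

section
/- Let c be a Coxeter element of W and P_c := {w ∈ W : w ≺_T c}. Then the map w ↦ w⁻¹c is a bijection from P_c to itself satisfying l_T(w⁻¹c) = n − l_T(w) for all w ∈ P_c. Consequently, for every 0 ≤ k ≤ n, the number of w ∈ P_c with l_T(w) = k equals the number of w ∈ P_c with l_T(w) = n − k. -/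
open Real
set_option linter.unusedSectionVars false
set_option linter.unusedVariables false
set_option linter.unreachableTactic false
set_option linter.unusedTactic false
set_option maxHeartbeats 1000000

namespace CoxPal

section Geom
variable {I : Type} [Fintype I] [DecidableEq I] (M : CoxeterMatrix I)










noncomputable def kM (i j : I) : ℝ := - Real.cos (π / M.M i j)

lemma kM_diag (i : I) : kM M i i = 1 := by simp [kM, M.diagonal i]

lemma kM_symm (i j : I) : kM M i j = kM M j i := by rw [kM, kM, M.symmetric]

/-- basis vector -/
noncomputable def ev (i : I) : I → ℝ := Pi.single i 1

noncomputable def kap (i : I) : (I → ℝ) →ₗ[ℝ] ℝ where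
  toFun v := ∑ j, kM M i j * v j
  map_add' x y := by simp [mul_add, Finset.sum_add_distrib]
  map_smul' r x := by simp [Finset.mul_sum]; ring_nf; simp [mul_assoc, mul_comm, mul_left_comm]

lemma kap_single (i r : I) : kap M i (ev r) = kM M i r := by
  simp [kap, ev, Pi.single_apply, mul_ite]

noncomputable def sig (i : I) : Module.End ℝ (I → ℝ) :=
  LinearMap.id - LinearMap.smulRight (2 • kap M i) (ev i)

lemma sig_apply (i : I) (v : I → ℝ) :
    sig M i v = v - (2 * kap M i v) • ev i := by
  simp [sig, two_smul, LinearMap.smulRight_apply]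
  module

lemma kap_sig (i : I) (v : I → ℝ) : kap M i (sig M i v) = - kap M i v := by
  rw [sig_apply]
  simp [kap_single, kM_diag]
  ring

lemma sig_sig (i : I) (v : I → ℝ) : sig M i (sig M i v) = v := by
  rw [sig_apply (v := sig M i v), kap_sig, sig_apply]
  module

lemma sig_ev_self (i : I) : sig M i (ev i) = - ev i := by
  rw [sig_apply, kap_single, kM_diag]
  module

lemma sig_ev_ne (i j : I) (h : j ≠ i) : sig M i (ev j) = ev j - (2 * kM M i j) • ev i := by
  rw [sig_apply, kap_single]

lemma sig_fixed (i : I) (v : I → ℝ) (h : kap M i v = 0) : sig M i v = v := by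
  rw [sig_apply, h]; module









noncomputable def chebU (t : ℝ) : ℕ → ℝ
  | 0 => 0
  | 1 => 1
  | (q+2) => t * chebU t (q+1) - chebU t q

noncomputable def Xm (c : ℝ) : Matrix (Fin 2) (Fin 2) ℝ := !![4*c^2-1, -2*c; 2*c, -1]

lemma Xm_sq (c : ℝ) : Xm c * Xm c = (4*c^2-2) • Xm c - 1 := by
  ext i j
  fin_cases i <;> fin_cases j <;>
    simp [Xm, Matrix.mul_apply, Fin.sum_univ_two, Matrix.one_apply] <;> ring

lemma Xm_pow_succ (c : ℝ) (q : ℕ) :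
    Xm c ^ (q+1) = chebU (4*c^2-2) (q+1) • Xm c - chebU (4*c^2-2) q • 1 := by
  induction q with
  | zero => simp [chebU]
  | succ q ih =>
    rw [pow_succ, ih, sub_mul, smul_mul_assoc, smul_mul_assoc, Xm_sq, one_mul]
    rw [show chebU (4*c^2-2) (q+2) = (4*c^2-2) * chebU (4*c^2-2) (q+1) - chebU (4*c^2-2) q
        from rfl]
    module

lemma chebU_sin (m : ℕ) (q : ℕ) :
    chebU (4 * (cos (π/m))^2 - 2) q * sin (2*π/m) = sin (q * (2*π/m)) := by
  have hφ : 4 * (cos (π/m))^2 - 2 = 2 * cos (2*π/m) := by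
    have h : (2:ℝ)*π/m = 2*(π/m) := by ring
    rw [h, Real.cos_two_mul]; ring
  induction q using Nat.twoStepInduction with
  | zero => simp [chebU]
  | one => simp [chebU]
  | more q ih1 ih2 =>
    have h2 : ((q+2:ℕ):ℝ) * (2*π/m) = ((q+1:ℕ):ℝ) * (2*π/m) + (2*π/m) := by push_cast; ring
    have h0 : ((q:ℕ):ℝ) * (2*π/m) = ((q+1:ℕ):ℝ) * (2*π/m) - (2*π/m) := by push_cast; ring
    rw [show chebU (4 * (cos (π/m))^2 - 2) (q+2)
          = (4 * (cos (π/m))^2 - 2) * chebU (4 * (cos (π/m))^2 - 2) (q+1)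
            - chebU (4 * (cos (π/m))^2 - 2) q from rfl]
    rw [h2, Real.sin_add, sub_mul, mul_assoc, ih2, ih1, h0, Real.sin_sub, hφ]
    ring

lemma Xm_pow_order (m : ℕ) (hm : 2 ≤ m) : (Xm (cos (π/m)))^m = 1 := by
  rcases Nat.lt_or_ge m 3 with h2 | h3
  · have hm2 : m = 2 := by omega
    subst hm2
    have : cos (π/(2:ℕ)) = 0 := by
      norm_num [Real.cos_pi_div_two]
    rw [this]
    ext i j
    fin_cases i <;> fin_cases j <;>
      simp [Xm, pow_two, Matrix.mul_apply, Fin.sum_univ_two, Matrix.one_apply] <;> norm_num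
  · have hmR : (0:ℝ) < m := by positivity
    have hφpos : 0 < 2*π/m := by positivity
    have hφlt : 2*π/m < π := by
      rw [div_lt_iff₀ hmR]
      have hπ := Real.pi_pos
      have h3R : (3:ℝ) ≤ m := by exact_mod_cast h3
      nlinarith
    have hsin : sin (2*π/m) ≠ 0 := ne_of_gt (Real.sin_pos_of_pos_of_lt_pi hφpos hφlt)
    obtain ⟨q, rfl⟩ : ∃ q, m = q + 3 := ⟨m - 3, by omega⟩
    have hum : chebU (4 * (cos (π/(q+3:ℕ)))^2 - 2) (q+3) = 0 := by
      have h := chebU_sin (q+3) (q+3)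
      have hc : ((q+3:ℕ):ℝ) * (2*π/(q+3:ℕ)) = 2*π := by
        have : ((q+3:ℕ):ℝ) ≠ 0 := by positivity
        field_simp
      rw [hc, Real.sin_two_pi] at h
      exact (mul_eq_zero.1 h).resolve_right hsin
    have hum1 : chebU (4 * (cos (π/(q+3:ℕ)))^2 - 2) (q+2) = -1 := by
      have h := chebU_sin (q+3) (q+2)
      have hc : ((q+2:ℕ):ℝ) * (2*π/(q+3:ℕ)) = 2*π - 2*π/(q+3:ℕ) := by
        have h0 : ((q+3:ℕ):ℝ) ≠ 0 := by positivity
        field_simp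
        push_cast; ring
      rw [hc, Real.sin_sub, Real.sin_two_pi, Real.cos_two_pi] at h
      have : chebU (4 * (cos (π/(q+3:ℕ)))^2 - 2) (q+2) * sin (2*π/(q+3:ℕ))
          = -1 * sin (2*π/(q+3:ℕ)) := by rw [h]; ring
      exact mul_right_cancel₀ hsin this
    have hq : q + 3 = (q + 2) + 1 := by omega
    rw [hq, Xm_pow_succ, show (q+2) + 1 = q + 3 from rfl, hum, hum1]
    simp




lemma Xm_entries (c : ℝ) : Xm c 0 0 = 4*c^2-1 ∧ Xm c 0 1 = -(2*c) ∧ Xm c 1 0 = 2*c ∧ Xm c 1 1 = -1 := by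
  refine ⟨?_, ?_, ?_, ?_⟩ <;> simp [Xm]

lemma sig_step (i j : I) (c : ℝ) (hc : kM M i j = -c) (a b : ℝ) (w : I → ℝ)
    (hwi : kap M i w = 0) (hwj : kap M j w = 0) :
    (sig M i * sig M j) (a • ev i + b • ev j + w)
      = ((4*c^2-1) * a + (-(2*c)) * b) • ev i + ((2*c) * a + (-1) * b) • ev j + w := by
  have hcji : kM M j i = -c := by rw [kM_symm]; exact hc
  have h1 : (sig M j) (a • ev i + b • ev j + w) = a • ev i + (2*c*a - b) • ev j + w := by
    rw [sig_apply]
    have : kap M j (a • ev i + b • ev j + w) = -(c*a) + b := by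
      simp [map_add, map_smul, kap_single, hwj, kM_diag, hcji]; ring
    rw [this]; module
  rw [Module.End.mul_apply, h1, sig_apply]
  have : kap M i (a • ev i + (2*c*a - b) • ev j + w) = a - c*(2*c*a - b) := by
    simp [map_add, map_smul, kap_single, hwi, kM_diag, hc]; ring
  rw [this]; module

lemma sig_pow_step (i j : I) (c : ℝ) (hc : kM M i j = -c) (a b : ℝ) (w : I → ℝ)
    (hwi : kap M i w = 0) (hwj : kap M j w = 0) (q : ℕ) :
    ((sig M i * sig M j)^q) (a • ev i + b • ev j + w)
      = (((Xm c)^q) 0 0 * a + ((Xm c)^q) 0 1 * b) • ev i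
        + (((Xm c)^q) 1 0 * a + ((Xm c)^q) 1 1 * b) • ev j + w := by
  induction q with
  | zero => simp [Matrix.one_apply]
  | succ q ih =>
    rw [pow_succ', Module.End.mul_apply, ih, sig_step M i j c hc _ _ w ?_ ?_]
    · have e00 : ((Xm c)^(q+1)) 0 0 = (4*c^2-1) * (((Xm c)^q) 0 0) + (-(2*c)) * (((Xm c)^q) 1 0) := by
        rw [pow_succ', Matrix.mul_apply, Fin.sum_univ_two]
        simp [Xm]
      have e01 : ((Xm c)^(q+1)) 0 1 = (4*c^2-1) * (((Xm c)^q) 0 1) + (-(2*c)) * (((Xm c)^q) 1 1) := by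
        rw [pow_succ', Matrix.mul_apply, Fin.sum_univ_two]; simp [Xm]
      have e10 : ((Xm c)^(q+1)) 1 0 = (2*c) * (((Xm c)^q) 0 0) + (-1) * (((Xm c)^q) 1 0) := by
        rw [pow_succ', Matrix.mul_apply, Fin.sum_univ_two]; simp [Xm]
      have e11 : ((Xm c)^(q+1)) 1 1 = (2*c) * (((Xm c)^q) 0 1) + (-1) * (((Xm c)^q) 1 1) := by
        rw [pow_succ', Matrix.mul_apply, Fin.sum_univ_two]; simp [Xm]
      rw [e00, e01, e10, e11]
      module
    · exact hwi
    · exact hwj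

lemma sig_order (i j : I) : (sig M i * sig M j)^(M.M i j) = 1 := by
  rcases eq_or_ne i j with rfl | hij
  · rw [M.diagonal i, pow_one]
    refine LinearMap.ext fun v => ?_
    simpa [Module.End.mul_apply] using sig_sig M i v
  · have hne1 : M.M i j ≠ 1 := M.off_diagonal i j hij
    rcases Nat.eq_zero_or_pos (M.M i j) with h0 | hpos
    · rw [h0, pow_zero]
    · have hm2 : 2 ≤ M.M i j := by omega
      set m := M.M i j with hmdef
      set c := cos (π/m) with hcdef
      have hc : kM M i j = -c := rfl
      have hc2 : c^2 < 1 := by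
        have h1 : 0 < π/m := by
          have := Real.pi_pos
          positivity
        have h2 : π/m < π := by
          rw [div_lt_iff₀ (by positivity : (0:ℝ) < m)]
          have := Real.pi_pos
          have : (2:ℝ) ≤ m := by exact_mod_cast hm2
          nlinarith [Real.pi_pos]
        nlinarith [Real.sin_sq_add_cos_sq (π/m), Real.sin_pos_of_pos_of_lt_pi h1 h2]
      have hden : 1 - c^2 ≠ 0 := by nlinarith
      refine LinearMap.ext fun v => ?_
      set a := (kap M i v + c * kap M j v)/(1-c^2) with ha
      set b := (kap M j v + c * kap M i v)/(1-c^2) with hb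
      set w := v - a • ev i - b • ev j with hw
      have hwi : kap M i w = 0 := by
        rw [hw]
        simp [map_sub, map_smul, kap_single, kM_diag, hc, ha, hb]
        field_simp
        ring
      have hwj : kap M j w = 0 := by
        rw [hw]
        simp [map_sub, map_smul, kap_single, kM_diag, kM_symm M j i, hc, ha, hb]
        field_simp
        ring
      have hv : v = a • ev i + b • ev j + w := by rw [hw]; module
      calc ((sig M i * sig M j)^m) v = ((sig M i * sig M j)^m) (a • ev i + b • ev j + w) := by rw [← hv]
        _ = v := by
            rw [sig_pow_step M i j c hc a b w hwi hwj, Xm_pow_order m hm2]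
            simp [Matrix.one_apply]
            rw [hv]



end Geom

section Rep


variable {I : Type} [Fintype I] [DecidableEq I] {M : CoxeterMatrix I}
  {W : Type} [Group W] [Fintype W] (cs : CoxeterSystem M W)

/-- The geometric representation. -/
noncomputable def rho : W →* Module.End ℝ (I → ℝ) :=
  cs.lift ⟨fun i => sig M i, fun i j => sig_order M i j⟩

lemma rho_simple (i : I) : rho cs (cs.simple i) = sig M i :=
  cs.lift_apply_simple _ i

lemma rho_inv_apply (w : W) (v : I → ℝ) : rho cs w⁻¹ (rho cs w v) = v := by
  have : rho cs w⁻¹ * rho cs w = 1 := by rw [← map_mul]; simp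
  calc rho cs w⁻¹ (rho cs w v) = (rho cs w⁻¹ * rho cs w) v := rfl
    _ = v := by rw [this]; rfl

/-- pointwise dot product -/
noncomputable def dotp (x y : I → ℝ) : ℝ := ∑ l, x l * y l

/-- The averaged invariant bilinear form. -/
noncomputable def bform (x y : I → ℝ) : ℝ := ∑ w : W, dotp (rho cs w x) (rho cs w y)

lemma bform_symm (x y : I → ℝ) : bform cs x y = bform cs y x := by
  unfold bform dotp; congr 1; ext w; congr 1; ext l; ring

lemma bform_add_right (x y z : I → ℝ) : bform cs x (y + z) = bform cs x y + bform cs x z := by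
  unfold bform dotp
  rw [← Finset.sum_add_distrib]
  congr 1; ext w
  rw [map_add, ← Finset.sum_add_distrib]
  congr 1; ext l
  simp [Pi.add_apply]; ring

lemma bform_smul_right (x : I → ℝ) (r : ℝ) (y : I → ℝ) :
    bform cs x (r • y) = r * bform cs x y := by
  unfold bform dotp
  rw [Finset.mul_sum]
  congr 1; ext w
  rw [map_smul, Finset.mul_sum]
  congr 1; ext l
  simp [Pi.smul_apply, smul_eq_mul]; ring

lemma bform_add_left (x y z : I → ℝ) : bform cs (x + y) z = bform cs x z + bform cs y z := by
  rw [bform_symm, bform_add_right, bform_symm cs z x, bform_symm cs z y]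

lemma bform_smul_left (r : ℝ) (x y : I → ℝ) : bform cs (r • x) y = r * bform cs x y := by
  rw [bform_symm, bform_smul_right, bform_symm]

lemma bform_neg_left (x y : I → ℝ) : bform cs (-x) y = - bform cs x y := by
  have := bform_smul_left cs (-1) x y; simpa using this

lemma bform_sub_right (x y z : I → ℝ) : bform cs x (y - z) = bform cs x y - bform cs x z := by
  have h1 : y - z = y + (-1:ℝ) • z := by module
  rw [h1, bform_add_right, bform_smul_right]; ring

lemma bform_invariant (u : W) (x y : I → ℝ) :
    bform cs (rho cs u x) (rho cs u y) = bform cs x y := by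
  unfold bform
  apply Fintype.sum_equiv (Equiv.mulRight u)
  intro w
  simp only [Equiv.coe_mulRight]
  have hx : rho cs w (rho cs u x) = rho cs (w * u) x := by rw [map_mul]; rfl
  have hy : rho cs w (rho cs u y) = rho cs (w * u) y := by rw [map_mul]; rfl
  rw [hx, hy]

lemma dotp_self_nonneg (x : I → ℝ) : 0 ≤ dotp x x :=
  Finset.sum_nonneg fun l _ => mul_self_nonneg _

lemma dotp_self_pos {x : I → ℝ} (hx : x ≠ 0) : 0 < dotp x x := by
  rcases Function.ne_iff.1 hx with ⟨l, hl⟩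
  have : (0:ℝ) < x l * x l := mul_self_pos.2 (by simpa using hl)
  exact Finset.sum_pos' (fun l _ => mul_self_nonneg _) ⟨l, Finset.mem_univ l, this⟩

lemma bform_self_pos {x : I → ℝ} (hx : x ≠ 0) : 0 < bform cs x x := by
  unfold bform
  refine Finset.sum_pos' (fun w _ => dotp_self_nonneg _) ⟨1, Finset.mem_univ 1, ?_⟩
  have h1 : rho cs 1 x = x := by rw [map_one]; rfl
  rw [h1]
  exact dotp_self_pos hx

lemma eq_zero_of_bform_self {x : I → ℝ} (h : bform cs x x = 0) : x = 0 := by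
  by_contra hx
  exact absurd h (ne_of_gt (bform_self_pos cs hx))

lemma eq_zero_of_bform_all {x : I → ℝ} (h : ∀ y, bform cs y x = 0) : x = 0 :=
  eq_zero_of_bform_self cs (by rw [bform_symm]; exact h x)

/-- The two-line trick: kap in terms of bform. -/
lemma kap_mul_bform (i : I) (v : I → ℝ) :
    kap M i v * bform cs (ev i) (ev i) = bform cs (ev i) v := by
  set y := v - kap M i v • ev i with hy
  have hky : kap M i y = 0 := by
    rw [hy, map_sub, map_smul]
    simp [kap_single, kM_diag]
  have hsy : sig M i y = y := by rw [sig_apply, hky]; simp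
  have hb : bform cs (ev i) y = 0 := by
    have h1 := bform_invariant cs (cs.simple i) (ev i) y
    rw [rho_simple, hsy] at h1
    have h2 : sig M i (ev i) = - ev i := by
      rw [sig_apply, kap_single, kM_diag]; module
    rw [h2, bform_neg_left] at h1
    linarith
  have hv : v = y + kap M i v • ev i := by rw [hy]; module
  calc kap M i v * bform cs (ev i) (ev i)
      = bform cs (ev i) y + kap M i v * bform cs (ev i) (ev i) := by rw [hb]; ring
    _ = bform cs (ev i) v := by
        rw [← bform_smul_right, ← bform_add_right, ← hv]

lemma ev_ne_zero (i : I) : ev i ≠ 0 := by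
  intro h
  have := congrFun h i
  simp [ev] at this

/-- Any reflection acts as an orthogonal reflection with a unit root. -/
lemma reflection_formula {t : W} (ht : cs.IsReflection t) :
    ∃ z : I → ℝ, (∀ v, rho cs t v = v - (2 * bform cs z v) • z) ∧ bform cs z z = 1 := by
  obtain ⟨w, i, rfl⟩ := ht
  set u0 : I → ℝ := rho cs w (ev i) with hu0
  have hbu : bform cs u0 u0 = bform cs (ev i) (ev i) := bform_invariant cs w _ _
  have hbupos : 0 < bform cs u0 u0 := by rw [hbu]; exact bform_self_pos cs (ev_ne_zero i)
  have key : ∀ v, rho cs (w * cs.simple i * w⁻¹) v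
      = v - ((2 * bform cs u0 v) / bform cs u0 u0) • u0 := by
    intro v
    have h1 : rho cs (w * cs.simple i * w⁻¹) v = rho cs w (sig M i (rho cs w⁻¹ v)) := by
      rw [map_mul, map_mul, rho_simple]; rfl
    have hkap : kap M i (rho cs w⁻¹ v) * bform cs (ev i) (ev i) = bform cs u0 v := by
      rw [kap_mul_bform]
      have : bform cs (ev i) (rho cs w⁻¹ v) = bform cs u0 v := by
        have := bform_invariant cs w (ev i) (rho cs w⁻¹ v)
        rw [← hu0] at this
        rw [← this]
        congr 1
        have h2 : rho cs w (rho cs w⁻¹ v) = v := by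
          have : rho cs w * rho cs w⁻¹ = 1 := by rw [← map_mul]; simp
          calc rho cs w (rho cs w⁻¹ v) = (rho cs w * rho cs w⁻¹) v := rfl
            _ = v := by rw [this]; rfl
        exact h2
      exact this
    rw [h1, sig_apply, map_sub, map_smul]
    have h2 : rho cs w (rho cs w⁻¹ v) = v := by
      have : rho cs w * rho cs w⁻¹ = 1 := by rw [← map_mul]; simp
      calc rho cs w (rho cs w⁻¹ v) = (rho cs w * rho cs w⁻¹) v := rfl
        _ = v := by rw [this]; rfl
    rw [h2, ← hu0]
    congr 2
    have hbne : bform cs (ev i) (ev i) ≠ 0 := by rw [← hbu]; exact ne_of_gt hbupos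
    field_simp at hkap ⊢
    rw [hbu]
    linarith [hkap]
  refine ⟨(Real.sqrt (bform cs u0 u0))⁻¹ • u0, fun v => ?_, ?_⟩
  · rw [key v, bform_smul_left, smul_smul]
    congr 1
    have hs : Real.sqrt (bform cs u0 u0) * Real.sqrt (bform cs u0 u0) = bform cs u0 u0 :=
      Real.mul_self_sqrt hbupos.le
    have hsne : Real.sqrt (bform cs u0 u0) ≠ 0 := by
      intro h
      rw [h, mul_zero] at hs
      exact absurd hs.symm (ne_of_gt hbupos)
    field_simp
    rw [Real.sq_sqrt hbupos.le]
  · rw [bform_smul_left, bform_smul_right]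
    have hs : Real.sqrt (bform cs u0 u0) * Real.sqrt (bform cs u0 u0) = bform cs u0 u0 :=
      Real.mul_self_sqrt hbupos.le
    have hsne : Real.sqrt (bform cs u0 u0) ≠ 0 := by
      intro h
      rw [h, mul_zero] at hs
      exact absurd hs.symm (ne_of_gt hbupos)
    field_simp
    rw [Real.sq_sqrt hbupos.le]

end Rep


section Span

variable {I : Type} [Fintype I] [DecidableEq I] {M : CoxeterMatrix I}
  {W : Type} [Group W] [Fintype W] (cs : CoxeterSystem M W)

open Classical in
/-- A chosen unit root for each reflection (0 for non-reflections). -/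
noncomputable def rootc (t : W) : I → ℝ :=
  if h : cs.IsReflection t then Classical.choose (reflection_formula cs h) else (0 : I → ℝ)

lemma rootc_spec {t : W} (ht : cs.IsReflection t) :
    (∀ v, rho cs t v = v - (2 * bform cs (rootc cs t) v) • rootc cs t)
      ∧ bform cs (rootc cs t) (rootc cs t) = 1 := by
  unfold rootc
  rw [dif_pos ht]
  exact Classical.choose_spec (reflection_formula cs ht)

/-- The fixed space of the whole group is zero. -/
lemma fixed_eq_zero {x : I → ℝ} (hx : ∀ w : W, rho cs w x = x) : x = 0 := by
  apply eq_zero_of_bform_all cs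
  intro y
  -- enough for basis vectors by linearity; we show for all y by writing y in basis
  have hev : ∀ i : I, bform cs (ev i) x = 0 := by
    intro i
    have h1 := bform_invariant cs (cs.simple i) (ev i) x
    rw [hx (cs.simple i), rho_simple] at h1
    have h2 : sig M i (ev i) = - ev i := by
      rw [sig_apply, kap_single, kM_diag]; module
    rw [h2, bform_neg_left] at h1
    linarith
  have hy : y = ∑ i, y i • ev i := by
    ext l
    simp [ev, Pi.single_apply]
  rw [hy]
  have : ∀ s : Finset I, bform cs (∑ i ∈ s, y i • ev i) x = 0 := by
    intro s
    induction s using Finset.induction_on with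
    | empty =>
      rw [Finset.sum_empty]
      have := bform_smul_left cs 0 x x
      simpa using this
    | insert a s hns ih =>
      rw [Finset.sum_insert hns, bform_add_left, bform_smul_left, ih, hev]
      ring
  exact this Finset.univ

/-- sum over the group of any orbit-type vector is fixed, hence zero -/
lemma sum_rho_eq_zero (v : I → ℝ) : ∑ w : W, rho cs w v = 0 := by
  apply fixed_eq_zero cs
  intro u
  have : rho cs u (∑ w : W, rho cs w v) = ∑ w : W, rho cs (u * w) v := by
    rw [map_sum]
    congr 1; ext w
    rw [map_mul]; rfl
  rw [this]
  apply Fintype.sum_equiv (Equiv.mulLeft u)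
  intro w
  rfl

/-- For any w and v, `rho cs w v - v` lies in the span of the roots of a generating
set of reflections. -/
lemma rho_sub_mem_span (G : Set W) (hG : ∀ g ∈ G, cs.IsReflection g)
    (hGgen : Subgroup.closure G = ⊤) (w : W) (v : I → ℝ) :
    rho cs w v - v ∈ Submodule.span ℝ (rootc cs '' G) := by
  have hw : w ∈ Subgroup.closure G := by rw [hGgen]; trivial
  induction hw using Subgroup.closure_induction generalizing v with
  | mem g hg =>
    have hspec := (rootc_spec cs (hG g hg)).1 v
    rw [hspec]
    have : v - (2 * bform cs (rootc cs g) v) • rootc cs g - v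
        = (-(2 * bform cs (rootc cs g) v)) • rootc cs g := by module
    rw [this]
    exact Submodule.smul_mem _ _ (Submodule.subset_span ⟨g, hg, rfl⟩)
  | one =>
    simp
  | mul a b ha hb iha ihb =>
    have : rho cs (a * b) v - v = (rho cs a (rho cs b v) - rho cs b v) + (rho cs b v - v) := by
      rw [map_mul]
      show (rho cs a * rho cs b) v - v = _
      rw [Module.End.mul_apply]
      module
    rw [this]
    exact Submodule.add_mem _ (iha _) (ihb _)
  | inv a ha iha =>
    have h1 : rho cs a⁻¹ v - v = -(rho cs a (rho cs a⁻¹ v) - rho cs a⁻¹ v) := by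
      have : rho cs a (rho cs a⁻¹ v) = v := by
        have hm : rho cs a * rho cs a⁻¹ = 1 := by rw [← map_mul]; simp
        calc rho cs a (rho cs a⁻¹ v) = (rho cs a * rho cs a⁻¹) v := rfl
          _ = v := by rw [hm]; rfl
      rw [this]; module
    rw [h1]
    exact Submodule.neg_mem _ (iha _)

/-- Roots of a generating set of reflections span everything. -/
lemma span_roots_eq_top (G : Set W) (hG : ∀ g ∈ G, cs.IsReflection g)
    (hGgen : Subgroup.closure G = ⊤) :
    Submodule.span ℝ (rootc cs '' G) = ⊤ := by
  rw [Submodule.eq_top_iff']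
  intro v
  have hsum : ∑ w : W, (rho cs w v - v) ∈ Submodule.span ℝ (rootc cs '' G) :=
    Submodule.sum_mem _ fun w _ => rho_sub_mem_span cs G hG hGgen w v
  have hconst : ∑ _w : W, v = (Fintype.card W : ℝ) • v := by
    rw [Finset.sum_const, Finset.card_univ, ← Nat.cast_smul_eq_nsmul ℝ]
  have hcalc : ∑ w : W, (rho cs w v - v) = - (Fintype.card W : ℝ) • v := by
    rw [Finset.sum_sub_distrib, sum_rho_eq_zero, hconst]
    module
  rw [hcalc] at hsum
  have hne : (Fintype.card W : ℝ) ≠ 0 := by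
    have : 0 < Fintype.card W := Fintype.card_pos
    positivity
  have := Submodule.smul_mem _ (-(Fintype.card W : ℝ))⁻¹ hsum
  rw [smul_smul] at this
  have heq : (-(Fintype.card W : ℝ))⁻¹ * -(Fintype.card W : ℝ) = 1 := by
    field_simp
  rw [heq, one_smul] at this
  exact this

end Span

section FixPt

variable {I : Type} [Fintype I] [DecidableEq I] {M : CoxeterMatrix I}
  {W : Type} [Group W] [Fintype W] (cs : CoxeterSystem M W)

lemma list_image_eq_range (xs : List W) :
    rootc cs '' {x | x ∈ xs} = Set.range (fun k : Fin xs.length => rootc cs (xs.get k)) := by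
  ext y
  constructor
  · rintro ⟨x, hx, rfl⟩
    obtain ⟨k, hk⟩ := List.mem_iff_get.1 hx
    exact ⟨k, by rw [List.get_eq_getElem] at hk; simp [hk]⟩
  · rintro ⟨k, rfl⟩
    refine ⟨xs.get k, ?_, rfl⟩
    show xs.get k ∈ xs
    exact List.mem_iff_get.2 ⟨k, rfl⟩

lemma sub_rho_prod_mem_span (xs : List W) (hxs : ∀ x ∈ xs, cs.IsReflection x) (v : I → ℝ) :
    v - rho cs xs.prod v ∈ Submodule.span ℝ (rootc cs '' {x | x ∈ xs}) := by
  induction xs generalizing v with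
  | nil => simp
  | cons x rest ih =>
    have hx : cs.IsReflection x := hxs x (List.mem_cons_self)
    set u := rho cs rest.prod v with hu
    have hsplit : v - rho cs (x :: rest).prod v = (v - u) + (u - rho cs x u) := by
      rw [List.prod_cons, map_mul]
      show v - (rho cs x * rho cs rest.prod) v = _
      rw [Module.End.mul_apply, ← hu]
      module
    rw [hsplit]
    apply Submodule.add_mem
    · have hsub : rootc cs '' {a | a ∈ rest} ⊆ rootc cs '' {a | a ∈ x :: rest} := by
        apply Set.image_mono
        intro a ha
        exact List.mem_cons_of_mem x ha
      exact Submodule.span_mono hsub (ih (fun a ha => hxs a (List.mem_cons_of_mem x ha)) v)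
    · have hspec := (rootc_spec cs hx).1 u
      rw [hspec]
      have : u - (u - (2 * bform cs (rootc cs x) u) • rootc cs x)
          = (2 * bform cs (rootc cs x) u) • rootc cs x := by module
      rw [this]
      exact Submodule.smul_mem _ _
        (Submodule.subset_span ⟨x, List.mem_cons_self, rfl⟩)

lemma rho_invol {t : W} (ht : cs.IsReflection t) (v : I → ℝ) :
    rho cs t (rho cs t v) = v := by
  have h : rho cs t * rho cs t = 1 := by
    rw [← map_mul, ht.mul_self, map_one]
  calc rho cs t (rho cs t v) = (rho cs t * rho cs t) v := rfl
    _ = v := by rw [h]; rfl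

lemma fixed_of_indep (xs : List W) (hxs : ∀ x ∈ xs, cs.IsReflection x)
    (hind : LinearIndependent ℝ (fun k : Fin xs.length => rootc cs (xs.get k)))
    (v : I → ℝ) (hv : rho cs xs.prod v = v) :
    ∀ x ∈ xs, rho cs x v = v := by
  induction xs with
  | nil => simp
  | cons x rest ih =>
    have hx : cs.IsReflection x := hxs x (List.mem_cons_self)
    have htail : LinearIndependent ℝ (fun k : Fin rest.length => rootc cs (rest.get k)) := by
      have := hind.comp (fun k : Fin rest.length => k.succ) (Fin.succ_injective _)
      exact this
    -- head root not in tail span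
    have hne : rootc cs x ∉ Submodule.span ℝ
        (Set.range (fun k : Fin rest.length => rootc cs (rest.get k))) := by
      have h0 : (0 : Fin (rest.length + 1)) ∉ {k : Fin (rest.length + 1) | k ≠ 0} := by simp
      have hnm := hind.notMem_span_image (s := {k : Fin (rest.length + 1) | k ≠ 0}) h0
      have himg : (fun k : Fin (x :: rest).length => rootc cs ((x :: rest).get k)) ''
            {k : Fin (rest.length + 1) | k ≠ 0}
          = Set.range (fun k : Fin rest.length => rootc cs (rest.get k)) := by
        ext y
        constructor
        · rintro ⟨k, hk, rfl⟩
          rcases Fin.eq_succ_of_ne_zero (by exact hk) with ⟨j, rfl⟩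
          exact ⟨j, rfl⟩
        · rintro ⟨j, rfl⟩
          exact ⟨j.succ, Fin.succ_ne_zero j, rfl⟩
      rw [himg] at hnm
      simpa using hnm
    set u := rho cs rest.prod v with hu
    have hxu : rho cs x u = v := by
      rw [hu, ← Module.End.mul_apply, ← map_mul, ← List.prod_cons]
      exact hv
    have huxv : u = rho cs x v := by
      rw [← hxu, rho_invol cs hx]
    have hdiff : rho cs x v - v ∈ Submodule.span ℝ
        (Set.range (fun k : Fin rest.length => rootc cs (rest.get k))) := by
      have h1 := sub_rho_prod_mem_span cs rest
        (fun a ha => hxs a (List.mem_cons_of_mem x ha)) v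
      rw [list_image_eq_range] at h1
      have h2 : rho cs x v - v = -(v - rho cs rest.prod v) := by
        rw [← hu, huxv]; module
      rw [h2]
      exact Submodule.neg_mem _ h1
    have hform := (rootc_spec cs hx).1 v
    have hcoef : rho cs x v - v = (-(2 * bform cs (rootc cs x) v)) • rootc cs x := by
      rw [hform]; module
    have hbz : bform cs (rootc cs x) v = 0 := by
      by_contra hb
      have hzmem : rootc cs x ∈ Submodule.span ℝ
          (Set.range (fun k : Fin rest.length => rootc cs (rest.get k))) := by
        have := Submodule.smul_mem _ (-(2 * bform cs (rootc cs x) v))⁻¹ (hcoef ▸ hdiff)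
        rw [smul_smul, inv_mul_cancel₀ (by simpa using hb), one_smul] at this
        exact this
      exact hne hzmem
    have hfixx : rho cs x v = v := by
      rw [hform, hbz]
      simp
    intro y hy
    rcases List.mem_cons.1 hy with rfl | hy'
    · exact hfixx
    · have hrest : rho cs rest.prod v = v := by rw [← hu, huxv, hfixx]
      exact ih (fun a ha => hxs a (List.mem_cons_of_mem x ha)) htail hrest y hy'

lemma fixfree_of_coxlike (xs : List W) (hxs : ∀ x ∈ xs, cs.IsReflection x)
    (hgen : Subgroup.closure {x | x ∈ xs} = ⊤)
    (hlen : xs.length = Fintype.card I) :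
    ∀ v, rho cs xs.prod v = v → v = 0 := by
  have hspan : Submodule.span ℝ (rootc cs '' {x | x ∈ xs}) = ⊤ :=
    span_roots_eq_top cs _ (fun g hg => hxs g hg) hgen
  have hspan' : Submodule.span ℝ
      (Set.range (fun k : Fin xs.length => rootc cs (xs.get k))) = ⊤ := by
    rw [← list_image_eq_range]; exact hspan
  have hind : LinearIndependent ℝ (fun k : Fin xs.length => rootc cs (xs.get k)) := by
    apply linearIndependent_of_top_le_span_of_card_eq_finrank
    · rw [hspan']
    · rw [Module.finrank_fintype_fun_eq_card]
      simpa using hlen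
  intro v hv
  have hfix := fixed_of_indep cs xs hxs hind v hv
  -- every root is orthogonal to v, and they span
  apply eq_zero_of_bform_all cs
  intro y
  have hy : ∀ x ∈ xs, bform cs (rootc cs x) v = 0 := by
    intro x hxm
    have hform := (rootc_spec cs (hxs x hxm)).1 v
    rw [hfix x hxm] at hform
    have : (2 * bform cs (rootc cs x) v) • rootc cs x = 0 := by
      have := hform
      apply_fun (fun z => v - z) at this
      simpa using this.symm
    rcases smul_eq_zero.1 this with h | h
    · linarith [h]
    · exfalso
      have h1 := (rootc_spec cs (hxs x hxm)).2
      rw [h] at h1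
      have h2 := bform_smul_left cs 0 (0 : I → ℝ) (0 : I → ℝ)
      simp at h2
      rw [show bform cs (0  : I → ℝ) (0 : I → ℝ) = 0 from h2] at h1
      norm_num at h1
  -- y in span of roots
  have hmem : y ∈ Submodule.span ℝ (rootc cs '' {x | x ∈ xs}) := by rw [hspan]; trivial
  induction hmem using Submodule.span_induction with
  | mem z hz =>
    obtain ⟨x, hxm, rfl⟩ := hz
    exact hy x hxm
  | zero =>
    have h2 := bform_smul_left cs 0 (0 : I → ℝ) v
    simpa using h2
  | add a b ha hb iha ihb => rw [bform_add_left, iha, ihb]; ring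
  | smul r a ha iha => rw [bform_smul_left, iha]; ring

lemma card_le_refl_word (ts : List W) (hts : ∀ t ∈ ts, cs.IsReflection t)
    (hfix : ∀ v, rho cs ts.prod v = v → v = 0) :
    Fintype.card I ≤ ts.length := by
  classical
  set f := rho cs ts.prod with hf
  set g : Module.End ℝ (I → ℝ) := f - 1 with hg
  have hker : LinearMap.ker g = ⊥ := by
    rw [LinearMap.ker_eq_bot']
    intro v hv
    apply hfix
    have hsub : f v - v = 0 := by
      have h0 : g v = 0 := hv
      rw [hg] at h0
      simpa [LinearMap.sub_apply] using h0
    exact sub_eq_zero.1 hsub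
  have hrank : Module.finrank ℝ (LinearMap.range g) = Fintype.card I := by
    have h1 := LinearMap.finrank_range_add_finrank_ker g
    rw [hker] at h1
    simp [Module.finrank_fintype_fun_eq_card] at h1
    exact h1
  have hle : LinearMap.range g ≤ Submodule.span ℝ (rootc cs '' {x | x ∈ ts}) := by
    rintro y ⟨v, rfl⟩
    have h1 := sub_rho_prod_mem_span cs ts hts v
    have h2 : g v = -(v - rho cs ts.prod v) := by
      rw [hg, hf]
      simp [LinearMap.sub_apply]
    rw [h2]
    exact Submodule.neg_mem _ h1
  have hfin : Module.finrank ℝ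
      (Submodule.span ℝ (rootc cs '' {x | x ∈ ts})) ≤ ts.length := by
    rw [list_image_eq_range]
    have h1 : (↑(Finset.image (fun k : Fin ts.length => rootc cs (ts.get k)) Finset.univ) : Set (I → ℝ))
        = Set.range (fun k : Fin ts.length => rootc cs (ts.get k)) := by
      rw [Finset.coe_image, Finset.coe_univ, Set.image_univ]
    calc Module.finrank ℝ (Submodule.span ℝ (Set.range fun k : Fin ts.length => rootc cs (ts.get k)))
        ≤ (Finset.image (fun k : Fin ts.length => rootc cs (ts.get k)) Finset.univ).card := by
          rw [← h1]
          exact finrank_span_finset_le_card _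
      _ ≤ Finset.univ.card := Finset.card_image_le
      _ = ts.length := by simp
  calc Fintype.card I = Module.finrank ℝ (LinearMap.range g) := hrank.symm
    _ ≤ Module.finrank ℝ (Submodule.span ℝ (rootc cs '' {x | x ∈ ts})) :=
        Submodule.finrank_mono hle
    _ ≤ ts.length := hfin

end FixPt

section Key

variable {I : Type} {M : CoxeterMatrix I} {W : Type} [Group W] (cs : CoxeterSystem M W)

lemma conj_of_odd {i j : I} (h : Odd (M.M i j)) : IsConj (cs.simple i) (cs.simple j) := by
  obtain ⟨k, hk⟩ := h
  set a := cs.simple i with ha0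
  set b := cs.simple j with hb0
  have ha : a * a = 1 := cs.simple_mul_simple_self i
  have hb : b * b = 1 := cs.simple_mul_simple_self j
  have hx : (a * b) ^ (2 * k + 1) = 1 := by
    rw [← hk]
    exact cs.simple_mul_simple_pow i j
  have hkey : a * (a * b) * a = b * a := by
    have : a * (a * b) * a = (a * a) * (b * a) := by group
    rw [this, ha, one_mul]
  have hinv : b * a = (a * b)⁻¹ := by
    rw [mul_inv_rev, cs.inv_simple, cs.inv_simple]
  have hconj : ∀ q : ℕ, a * (a * b) ^ q * a = ((a * b)⁻¹) ^ q := by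
    intro q
    induction q with
    | zero => simpa using ha
    | succ q ih =>
      have : a * (a * b) ^ (q + 1) * a = (a * (a * b) ^ q * a) * (a * (a * b) * a) := by
        rw [pow_succ]
        have hmid : (a * (a * b) ^ q * a) * (a * (a * b) * a)
            = a * (a * b) ^ q * (a * a) * (a * b) * a := by
          group
        rw [hmid, ha, mul_one]
        group
      rw [this, ih, hkey, hinv, pow_succ]
  rw [isConj_iff]
  refine ⟨(a * b) ^ k, ?_⟩
  have hwinv : ((a * b) ^ k)⁻¹ = a * (a * b) ^ k * a := by
    rw [hconj k, inv_pow]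
  rw [hwinv]
  have h2k : (a * b) ^ (2 * k) = (a * b)⁻¹ := by
    have : (a * b) ^ (2 * k + 1) = (a * b) ^ (2 * k) * (a * b) := by rw [pow_succ]
    rw [this] at hx
    exact eq_inv_of_mul_eq_one_left hx
  calc (a * b) ^ k * a * (a * (a * b) ^ k * a)
      = (a * b) ^ k * (a * a) * (a * b) ^ k * a := by group
    _ = (a * b) ^ k * (a * b) ^ k * a := by rw [ha, mul_one]
    _ = (a * b) ^ (2 * k) * a := by rw [← pow_add]; ring_nf
    _ = (a * b)⁻¹ * a := by rw [h2k]
    _ = b := by rw [← hinv]; rw [mul_assoc, ha, mul_one]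

/-- Every simple reflection of `cs` is conjugate to an element of any generating set
consisting of reflections of `cs`. -/
lemma exists_conj_mem_gen (S' : Set W) (hS'refl : ∀ x ∈ S', cs.IsReflection x)
    (hS'gen : Subgroup.closure S' = ⊤) (j : I) :
    ∃ x ∈ S', IsConj x (cs.simple j) := by
  classical
  by_contra hcon
  push_neg at hcon
  -- the parity homomorphism detecting the conjugacy class of s j
  set f : I → Multiplicative (ZMod 2) :=
    fun i => if IsConj (cs.simple i) (cs.simple j) then Multiplicative.ofAdd 1 else 1 with hf
  have hsq : ∀ z : Multiplicative (ZMod 2), z * z = 1 := by decide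
  have hlift : ∀ i i', (f i * f i') ^ (M.M i i') = 1 := by
    intro i i'
    rcases Nat.even_or_odd (M.M i i') with he | ho
    · obtain ⟨r, hr⟩ := he
      have : (f i * f i') ^ (M.M i i') = ((f i * f i') ^ 2) ^ r := by
        rw [← pow_mul]
        congr 1
        omega
      rw [this]
      have h2 : (f i * f i') ^ 2 = 1 := by
        rw [pow_two]
        have hcomm : ∀ z w : Multiplicative (ZMod 2), z * w = w * z := by decide
        have : (f i * f i') * (f i * f i') = (f i * f i) * (f i' * f i') := by
          rw [mul_assoc (f i) (f i') (f i * f i'), ← mul_assoc (f i') (f i) (f i'),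
            hcomm (f i') (f i), mul_assoc (f i) (f i') (f i'), ← mul_assoc]
        rw [this, hsq, hsq, one_mul]
      rw [h2, one_pow]
    · have hcf : f i = f i' := by
        have hcij : IsConj (cs.simple i) (cs.simple i') := conj_of_odd cs ho
        rw [hf]
        simp only
        by_cases hi : IsConj (cs.simple i) (cs.simple j)
        · rw [if_pos hi, if_pos (hcij.symm.trans hi)]
        · rw [if_neg hi, if_neg (fun h => hi (hcij.trans h))]
      rw [hcf, hsq, one_pow]
  set ψ : W →* Multiplicative (ZMod 2) := cs.lift ⟨f, hlift⟩ with hψ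
  have hψs : ∀ i, ψ (cs.simple i) = f i := fun i => cs.lift_apply_simple hlift i
  have hψS' : ∀ x ∈ S', ψ x = 1 := by
    intro x hx
    obtain ⟨w, i, rfl⟩ := hS'refl x hx
    have : ψ (w * cs.simple i * w⁻¹) = ψ w * f i * (ψ w)⁻¹ := by
      rw [map_mul, map_mul, map_inv, hψs]
    rw [this]
    have hcomm : ∀ z w : Multiplicative (ZMod 2), z * w = w * z := by decide
    rw [hcomm (ψ w) (f i), mul_assoc, mul_inv_cancel, mul_one]
    -- f i must be 1
    by_cases hi : IsConj (cs.simple i) (cs.simple j)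
    · exfalso
      apply hcon (w * cs.simple i * w⁻¹) hx
      have h1 : IsConj (cs.simple i) (w * cs.simple i * w⁻¹) := by
        rw [isConj_iff]
        exact ⟨w, rfl⟩
      exact h1.symm.trans hi
    · rw [hf]; simp only [if_neg hi]
  have hψtop : ∀ w : W, ψ w = 1 := by
    intro w
    have hw : w ∈ Subgroup.closure S' := by rw [hS'gen]; trivial
    induction hw using Subgroup.closure_induction with
    | mem x hx => exact hψS' x hx
    | one => exact map_one ψ
    | mul a b ha hb iha ihb => rw [map_mul, iha, ihb, one_mul]
    | inv a ha iha => rw [map_inv, iha, inv_one]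
  have hcontr := hψtop (cs.simple j)
  rw [hψs j, hf] at hcontr
  simp only [if_pos (IsConj.refl _)] at hcontr
  exact absurd hcontr (by decide)

end Key

section RL

variable {W : Type} [Group W]

lemma reflLen_le (T : Set W) {w : W} (l : List W) (hl : ∀ t ∈ l, t ∈ T) (hp : l.prod = w) :
    reflLen T w ≤ l.length :=
  Nat.sInf_le ⟨l, hl, rfl, hp⟩

lemma reflLen_exists (T : Set W) (hgen : Submonoid.closure T = ⊤) (w : W) :
    ∃ l : List W, (∀ t ∈ l, t ∈ T) ∧ l.length = reflLen T w ∧ l.prod = w := by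
  have hw : w ∈ Submonoid.closure T := by rw [hgen]; trivial
  obtain ⟨l, hl, hp⟩ := Submonoid.exists_list_of_mem_closure hw
  have hne : {k | ∃ l : List W, (∀ t ∈ l, t ∈ T) ∧ l.length = k ∧ l.prod = w}.Nonempty :=
    ⟨l.length, l, hl, rfl, hp⟩
  exact Nat.sInf_mem hne

lemma reflLen_one (T : Set W) : reflLen T 1 = 0 :=
  Nat.le_zero.1 (reflLen_le T [] (by simp) (by simp))

lemma prod_reverse_inv (l : List W) (h : ∀ t ∈ l, t * t = 1) :
    l.reverse.prod = l.prod⁻¹ := by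
  induction l with
  | nil => simp
  | cons x xs ih =>
    rw [List.reverse_cons, List.prod_append, ih (fun t ht => h t (List.mem_cons_of_mem x ht)),
      List.prod_cons, List.prod_cons, List.prod_nil, mul_one, mul_inv_rev]
    congr 1
    exact (inv_eq_of_mul_eq_one_right (h x (List.mem_cons_self))).symm

lemma reflLen_inv (T : Set W) (hgen : Submonoid.closure T = ⊤)
    (hinv : ∀ t ∈ T, t * t = 1) (w : W) : reflLen T w⁻¹ = reflLen T w := by
  have hle : ∀ u : W, reflLen T u⁻¹ ≤ reflLen T u := by
    intro u
    obtain ⟨l, hl, hlen, hp⟩ := reflLen_exists T hgen u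
    have := reflLen_le T l.reverse (fun t ht => hl t (List.mem_reverse.1 ht))
      (by rw [prod_reverse_inv l (fun t ht => hinv t (hl t ht)), hp])
    simpa [hlen] using this
  refine le_antisymm (hle w) ?_
  have := hle w⁻¹
  simpa using this

lemma prod_map_conj (u : W) (l : List W) :
    (l.map (fun t => u * t * u⁻¹)).prod = u * l.prod * u⁻¹ := by
  induction l with
  | nil => simp
  | cons x xs ih =>
    rw [List.map_cons, List.prod_cons, List.prod_cons, ih]
    group

lemma reflLen_conj (T : Set W) (hgen : Submonoid.closure T = ⊤)
    (hconj : ∀ t ∈ T, ∀ u : W, u * t * u⁻¹ ∈ T) (u w : W) :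
    reflLen T (u * w * u⁻¹) = reflLen T w := by
  have hle : ∀ a b : W, reflLen T (a * b * a⁻¹) ≤ reflLen T b := by
    intro a b
    obtain ⟨l, hl, hlen, hp⟩ := reflLen_exists T hgen b
    have hmem : ∀ t ∈ l.map (fun t => a * t * a⁻¹), t ∈ T := by
      intro t ht
      obtain ⟨x, hx, rfl⟩ := List.mem_map.1 ht
      exact hconj x (hl x hx) a
    have := reflLen_le T (l.map (fun t => a * t * a⁻¹)) hmem
      (by rw [prod_map_conj, hp])
    simpa [hlen] using this
  refine le_antisymm (hle u w) ?_
  have h2 := hle u⁻¹ (u * w * u⁻¹)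
  have : u⁻¹ * (u * w * u⁻¹) * u⁻¹⁻¹ = w := by group
  rw [this] at h2
  exact h2

end RL

section Main

variable {B : Type} [Fintype B] [DecidableEq B] {W : Type} [Group W] [Fintype W]
  {M : CoxeterMatrix B} (cs : CoxeterSystem M W)

lemma T_closure (T : Set W) (hT : T = {t | cs.IsReflection t}) :
    Submonoid.closure T = ⊤ := by
  have hsub : Set.range cs.simple ⊆ T := by
    rintro x ⟨i, rfl⟩
    rw [hT]
    exact cs.isReflection_simple i
  refine le_antisymm le_top ?_
  rw [← cs.submonoid_closure_range_simple]
  exact Submonoid.closure_mono hsub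

/-- Key counting lemma : the rank is at most the size of any generating
set of reflections (as a list). -/
lemma card_le_gen_refl (xs : List W) (hxs : ∀ x ∈ xs, cs.IsReflection x)
    (hgen : Subgroup.closure {x | x ∈ xs} = ⊤) :
    Fintype.card B ≤ xs.length := by
  have hspan : Submodule.span ℝ (rootc cs '' {x | x ∈ xs}) = ⊤ :=
    span_roots_eq_top cs _ hxs hgen
  have h1 : Fintype.card B
      = Module.finrank ℝ (Submodule.span ℝ (rootc cs '' {x | x ∈ xs})) := by
    rw [hspan, finrank_top, Module.finrank_fintype_fun_eq_card]
  rw [h1, list_image_eq_range]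
  have h2 : (↑(Finset.image (fun k : Fin xs.length => rootc cs (xs.get k)) Finset.univ) : Set (B → ℝ))
      = Set.range (fun k : Fin xs.length => rootc cs (xs.get k)) := by
    rw [Finset.coe_image, Finset.coe_univ, Set.image_univ]
  calc Module.finrank ℝ (Submodule.span ℝ (Set.range fun k : Fin xs.length => rootc cs (xs.get k)))
      ≤ (Finset.image (fun k : Fin xs.length => rootc cs (xs.get k)) Finset.univ).card := by
        rw [← h2]
        exact finrank_span_finset_le_card _
    _ ≤ Finset.univ.card := Finset.card_image_le
    _ = xs.length := by simp

/-- THE MAIN LEMMA: the reflection length of a Coxeter element is the rank. -/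
lemma reflLen_coxeter_eq (T : Set W) (hT : T = {t | cs.IsReflection t})
    (c : W) (hc : IsCoxeterElement T c) : reflLen T c = Fintype.card B := by
  classical
  obtain ⟨L, R, hch, rfl⟩ := hc
  set xs := L ++ R with hxs0
  obtain ⟨m, M', cs', hrange⟩ := hch.simple
  have hxset : {x | x ∈ xs} = Set.range cs'.simple := by
    rw [hrange]
    ext x
    simp [hxs0, List.mem_append, Set.mem_union]
  have hxT : ∀ x ∈ xs, x ∈ T := by
    intro x hx
    rcases List.mem_append.1 hx with h | h
    · exact hch.memL x h
    · exact hch.memR x h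
  have hxrefl : ∀ x ∈ xs, cs.IsReflection x := by
    intro x hx
    have := hxT x hx
    rw [hT] at this
    exact this
  have hgen' : Subgroup.closure {x | x ∈ xs} = ⊤ := by
    rw [hxset]
    exact cs'.subgroup_closure_range_simple
  -- xs has no duplicates
  have hnodup : xs.Nodup := by
    rw [hxs0]
    refine List.Nodup.append hch.nodupL hch.nodupR ?_
    intro a ha hb
    exact hch.disj a ha hb
  -- p ≤ m
  have hpm : xs.length ≤ m := by
    have h1 : xs.length = xs.toFinset.card := (List.toFinset_card_of_nodup hnodup).symm
    have h2 : xs.toFinset ⊆ Finset.univ.image cs'.simple := by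
      intro x hx
      rw [List.mem_toFinset] at hx
      have hx2 : x ∈ Set.range cs'.simple := by rw [← hxset]; exact hx
      obtain ⟨k, rfl⟩ := hx2
      exact Finset.mem_image.2 ⟨k, Finset.mem_univ k, rfl⟩
    calc xs.length = xs.toFinset.card := h1
      _ ≤ (Finset.univ.image cs'.simple).card := Finset.card_le_card h2
      _ ≤ (Finset.univ : Finset (Fin m)).card := Finset.card_image_le
      _ = m := by simp
  -- m ≤ n : every cs-simple is a cs'-reflection
  have hsimple_refl : ∀ j : B, cs'.IsReflection (cs.simple j) := by
    intro j
    obtain ⟨x, hxS', hconj⟩ := exists_conj_mem_gen cs (Set.range cs'.simple)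
      (by
        intro x hx
        apply hxrefl
        have : x ∈ {x | x ∈ xs} := by rw [hxset]; exact hx
        exact this)
      (by rw [cs'.subgroup_closure_range_simple])
      j
    obtain ⟨k, rfl⟩ := hxS'
    obtain ⟨u, hu⟩ := isConj_iff.1 hconj
    exact ⟨u, k, hu.symm⟩
  have hmn : m ≤ Fintype.card B := by
    set sb : List W := (Finset.univ.toList (α := B)).map cs.simple with hsb
    have hsblen : sb.length = Fintype.card B := by
      rw [hsb, List.length_map, Finset.length_toList, Finset.card_univ]
    have hsbrefl : ∀ x ∈ sb, cs'.IsReflection x := by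
      intro x hx
      obtain ⟨j, _, rfl⟩ := List.mem_map.1 hx
      exact hsimple_refl j
    have hsbgen : Subgroup.closure {x | x ∈ sb} = ⊤ := by
      have : {x | x ∈ sb} = Set.range cs.simple := by
        ext x
        simp [hsb, List.mem_map, Finset.mem_toList]
      rw [this]
      exact cs.subgroup_closure_range_simple
    have := card_le_gen_refl cs' sb hsbrefl hsbgen
    rw [hsblen, Fintype.card_fin] at this
    exact this
  have hnp : Fintype.card B ≤ xs.length := card_le_gen_refl cs xs hxrefl hgen'
  have hlen_eq : xs.length = Fintype.card B := le_antisymm (hpm.trans hmn) hnp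
  -- c has no nonzero fixed vector
  have hfixfree := fixfree_of_coxlike cs xs hxrefl hgen' hlen_eq
  -- lower bound
  have hclosT : Submonoid.closure T = ⊤ := T_closure cs T hT
  obtain ⟨l, hlT, hllen, hlprod⟩ := reflLen_exists T hclosT (L.prod * R.prod)
  have hxsprod : xs.prod = L.prod * R.prod := by rw [hxs0, List.prod_append]
  have hlow : Fintype.card B ≤ l.length := by
    apply card_le_refl_word cs l
    · intro t ht
      have := hlT t ht
      rw [hT] at this
      exact this
    · intro v hv
      apply hfixfree v
      rw [hxsprod, ← hlprod]
      exact hv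
  have hup : reflLen T (L.prod * R.prod) ≤ xs.length :=
    reflLen_le T xs hxT hxsprod
  omega

end Main

end CoxPal

open CoxPal in
/-- The map `w ↦ w⁻¹c` is a bijection of `P_c = {w : w ≺_T c}` onto itself with
`l_T(w⁻¹c) = n − l_T(w)`; consequently the rank generating function of `P_c` is
palindromic: for `0 ≤ k ≤ n`, the number of `w ∈ P_c` with `l_T(w) = k` equals the
number with `l_T(w) = n − k`. -/
theorem palindromicity_of_divisors_of_coxeter_element
    {B : Type} [Fintype B] {W : Type} [Group W] [Finite W] {M : CoxeterMatrix B}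
    (cs : CoxeterSystem M W)
    (T : Set W) (hT : T = {t | cs.IsReflection t})
    (n : ℕ) (hn : n = Fintype.card B)
    (c : W) (hc : IsCoxeterElement T c) :
    Set.BijOn (fun w => w⁻¹ * c) {w | absLE T w c} {w | absLE T w c}
      ∧ (∀ w, absLE T w c → reflLen T (w⁻¹ * c) = n - reflLen T w)
      ∧ ∀ k ≤ n, {w | absLE T w c ∧ reflLen T w = k}.ncard
          = {w | absLE T w c ∧ reflLen T w = n - k}.ncard := by
  classical
  cases nonempty_fintype W
  have hclosT : Submonoid.closure T = ⊤ := T_closure cs T hT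
  have hconjT : ∀ t ∈ T, ∀ u : W, u * t * u⁻¹ ∈ T := by
    intro t ht u
    rw [hT] at ht ⊢
    exact ht.conj u
  have hcl : ∀ u w : W, reflLen T (u * w * u⁻¹) = reflLen T w :=
    reflLen_conj T hclosT hconjT
  have hlc : reflLen T c = n := by rw [hn]; exact reflLen_coxeter_eq cs T hT c hc
  -- the map preserves absLE
  have key1 : ∀ w, absLE T w c → absLE T (w⁻¹ * c) c := by
    intro w hw
    have hw' : reflLen T w + reflLen T (w⁻¹ * c) = reflLen T c := hw
    show reflLen T (w⁻¹ * c) + reflLen T ((w⁻¹ * c)⁻¹ * c) = reflLen T c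
    have h1 : (w⁻¹ * c)⁻¹ * c = c⁻¹ * w * c := by group
    have h2 : reflLen T (c⁻¹ * w * c) = reflLen T w := by
      have := hcl c⁻¹ w
      rw [inv_inv] at this
      exact this
    rw [h1, h2]
    omega
  have keysurj : ∀ v, absLE T v c → absLE T (c * v⁻¹) c := by
    intro v hv
    have hv' : reflLen T v + reflLen T (v⁻¹ * c) = reflLen T c := hv
    show reflLen T (c * v⁻¹) + reflLen T ((c * v⁻¹)⁻¹ * c) = reflLen T c
    have h1 : (c * v⁻¹)⁻¹ * c = v := by group
    have h2 : reflLen T (c * v⁻¹) = reflLen T (v⁻¹ * c) := by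
      have h3 := hcl c (v⁻¹ * c)
      have h4 : c * (v⁻¹ * c) * c⁻¹ = c * v⁻¹ := by group
      rw [h4] at h3
      exact h3
    rw [h1, h2]
    omega
  have hinj : ∀ s : Set W, Set.InjOn (fun w => w⁻¹ * c) s := by
    intro s a _ b _ h
    simp only at h
    have := mul_right_cancel h
    exact inv_injective this
  refine ⟨⟨fun w hw => key1 w hw, hinj _, ?_⟩, ?_, ?_⟩
  · -- surjectivity onto P_c
    intro v hv
    refine ⟨c * v⁻¹, keysurj v hv, ?_⟩
    show (c * v⁻¹)⁻¹ * c = v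
    group
  · -- length complement
    intro w hw
    have hw' : reflLen T w + reflLen T (w⁻¹ * c) = reflLen T c := hw
    rw [hlc] at hw'
    omega
  · -- palindromicity
    intro k hk
    have himg : (fun w => w⁻¹ * c) '' {w | absLE T w c ∧ reflLen T w = k}
        = {w | absLE T w c ∧ reflLen T w = n - k} := by
      ext v
      constructor
      · rintro ⟨w, ⟨hw1, hw2⟩, rfl⟩
        refine ⟨key1 w hw1, ?_⟩
        show reflLen T (w⁻¹ * c) = n - k
        have hw' : reflLen T w + reflLen T (w⁻¹ * c) = reflLen T c := hw1
        rw [hlc] at hw'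
        omega
      · rintro ⟨hv1, hv2⟩
        refine ⟨c * v⁻¹, ⟨keysurj v hv1, ?_⟩, ?_⟩
        · have habs : reflLen T (c * v⁻¹) + reflLen T ((c * v⁻¹)⁻¹ * c) = reflLen T c :=
            keysurj v hv1
          have h1 : (c * v⁻¹)⁻¹ * c = v := by group
          rw [h1, hlc, hv2] at habs
          omega
        · show (c * v⁻¹)⁻¹ * c = v
          group
    calc {w | absLE T w c ∧ reflLen T w = k}.ncard
        = ((fun w => w⁻¹ * c) '' {w | absLE T w c ∧ reflLen T w = k}).ncard :=
          (Set.ncard_image_of_injOn (hinj _)).symm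
      _ = {w | absLE T w c ∧ reflLen T w = n - k}.ncard := by rw [himg]
end
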